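/- arXiv:1306.5225 — 6 statements merged into one kernel-verified Lean document; each statement's English description precedes it below -/
import Mathlib

section
/- Let A and B be homogeneous elements of M_n(F). Then F(A,B) > 0 if and only if there exists an index j such that the j-th column of A is nonzero and the j-th row of B is zero. -/
open scoped BigOperators

/-- The free associative algebra on variables indexed by pairs (degree in `ZMod n`, index). -/
abbrev FA (F : Type*) [Field F] (n : ℕ) := FreeAlgebra F (ZMod n × ℕ)

/-- The graded monomial corresponding to a word of variables. -/
def mono (F : Type*) [Field F] (n : ℕ) (w : List (ZMod n × ℕ)) : FA F n :=
  (w.map fun p => FreeAlgebra.ι F p).prod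

/-- The homogeneous component of degree `g` of the free graded algebra. -/
def homComp (F : Type*) [Field F] (n : ℕ) (g : ZMod n) : Submodule F (FA F n) :=
  Submodule.span F
    {x | ∃ w : List (ZMod n × ℕ), (w.map Prod.fst).sum = g ∧ x = mono F n w}

/-- A `T_{Z_n}`-ideal: invariant under all graded endomorphisms. -/
def IsTIdeal (F : Type*) [Field F] (n : ℕ) (I : Ideal (FA F n)) : Prop :=
  ∀ φ : FA F n →ₐ[F] FA F n,
    (∀ g : ZMod n, ∀ x ∈ homComp F n g, φ x ∈ homComp F n g) →
    ∀ x ∈ I, φ x ∈ I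

/-- The `T_{Z_n}`-ideal generated by a set of graded polynomials. -/
def TIdealGen (F : Type*) [Field F] (n : ℕ) (S : Set (FA F n)) : Ideal (FA F n) :=
  sInf {I : Ideal (FA F n) | IsTIdeal F n I ∧ S ⊆ I}

/-- The Vasilovsky polynomials. -/
def vasSet (F : Type*) [Field F] (n : ℕ) : Set (FA F n) :=
  {f | ∃ r s : ℕ,
      f = FreeAlgebra.ι F ((0 : ZMod n), r) * FreeAlgebra.ι F ((0 : ZMod n), s)
        - FreeAlgebra.ι F ((0 : ZMod n), s) * FreeAlgebra.ι F ((0 : ZMod n), r)} ∪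
  {f | ∃ (g : ZMod n) (r s t : ℕ),
      f = FreeAlgebra.ι F (g, r) * FreeAlgebra.ι F (-g, s) * FreeAlgebra.ι F (g, t)
        - FreeAlgebra.ι F (g, t) * FreeAlgebra.ι F (-g, s) * FreeAlgebra.ι F (g, r)}

/-- `I_n`, the `T_{Z_n}`-ideal generated by the Vasilovsky identities. -/
def In' (F : Type*) [Field F] (n : ℕ) : Ideal (FA F n) := TIdealGen F n (vasSet F n)

/-- `f` is a graded identity of the algebra `B` with `ZMod n`-grading `gr`. -/
def IsGIdentity (F : Type*) [Field F] (n : ℕ) {B : Type*} [Ring B] [Algebra F B]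
    (gr : ZMod n → Set B) (f : FA F n) : Prop :=
  ∀ σ : ZMod n × ℕ → B, (∀ p : ZMod n × ℕ, σ p ∈ gr p.1) →
    FreeAlgebra.lift F σ f = 0

/-- The ideal of graded identities. -/
def TIdOf (F : Type*) [Field F] (n : ℕ) {B : Type*} [Ring B] [Algebra F B]
    (gr : ZMod n → Set B) : Ideal (FA F n) where
  carrier := {f | IsGIdentity F n gr f}
  zero_mem' := fun σ _ => map_zero _
  add_mem' := fun ha hb σ hσ => by
    rw [map_add, ha σ hσ, hb σ hσ, add_zero]
  smul_mem' := fun c a ha σ hσ => by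
    rw [smul_eq_mul, map_mul, ha σ hσ, mul_zero]

/-- The Di Vincenzo–Vasilovsky grading of the matrix algebra. -/
def matGr (F : Type*) [Field F] (n : ℕ) (t : ZMod n) :
    Set (Matrix (ZMod n) (ZMod n) F) :=
  {A | ∀ i j : ZMod n, A i j ≠ 0 → j - i = t}

/-- The index of the block (of sizes `d 0, d 1, …`) containing row/column `i`. -/
noncomputable def blockOf (d : ℕ → ℕ) (i : ℕ) : ℕ :=
  sInf {k | i < ∑ j ∈ Finset.range (k + 1), d j}

/-- The grading of the block-triangular algebra `BT(d₀,…,d_{m-1};F)`: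
homogeneous component of degree `t`. -/
def BTgr (F : Type*) [Field F] (n : ℕ) (d : ℕ → ℕ) (t : ZMod n) :
    Set (Matrix (ZMod n) (ZMod n) F) :=
  {A | ∀ i j : ZMod n, A i j ≠ 0 → j - i = t ∧ blockOf d i.val ≤ blockOf d j.val}

/-- Number of zero rows of a matrix. -/
noncomputable def fRows {R : Type*} [Zero R] {n : ℕ} (A : Matrix (ZMod n) (ZMod n) R) : ℕ :=
  Nat.card {i : ZMod n // A i = 0}

/-- Number of falls between `A` and `B`. -/
noncomputable def falls {R : Type*} [CommRing R] {n : ℕ} [NeZero n]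
    (A B : Matrix (ZMod n) (ZMod n) R) : ℕ :=
  fRows (A * B) - fRows A

/-- The generic matrix `G_r^{(g)}` of `BT(d;F)`. -/
noncomputable def genBT (F : Type*) [Field F] (n : ℕ) (d : ℕ → ℕ) (g : ZMod n) (r : ℕ) :
    Matrix (ZMod n) (ZMod n) (MvPolynomial ((ZMod n × ZMod n) × ℕ) F) :=
  Matrix.of fun p q =>
    if q - p = g ∧ blockOf d p.val ≤ blockOf d q.val
    then MvPolynomial.X ((p, q), r) else 0

/-- The grading of `BT(n-1,1;F)`: homogeneous component of degree `t`. -/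
def BT1gr (F : Type*) [Field F] (n : ℕ) (t : ZMod n) :
    Set (Matrix (ZMod n) (ZMod n) F) :=
  {A | (∀ i j : ZMod n, A i j ≠ 0 → j - i = t) ∧
       ∀ j : ZMod n, j.val < n - 1 → A ((n - 1 : ℕ) : ZMod n) j = 0}

/-- The matrix `Σ_{i=1}^{n-1} e_{i,i+g}` used in the canonical substitution. -/
def subMat (F : Type*) [Field F] (n : ℕ) (g : ZMod n) :
    Matrix (ZMod n) (ZMod n) F :=
  Matrix.of fun p q => if p ≠ ((n - 1 : ℕ) : ZMod n) ∧ q = p + g then 1 else 0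

/-- for homogeneous `A`, `B` in `M_n(F)`, `F(A,B) > 0` iff there is an
index `j` whose column in `A` is nonzero and whose row in `B` is zero. -/
theorem falls_pos_iff (F : Type*) [Field F] [CharZero F] (n : ℕ) [NeZero n]
    (tA tB : ZMod n) (A B : Matrix (ZMod n) (ZMod n) F)
    (hA : A ∈ matGr F n tA) (hB : B ∈ matGr F n tB) :
    0 < falls A B ↔ ∃ j : ZMod n, (∃ i : ZMod n, A i j ≠ 0) ∧ (∀ k : ZMod n, B j k = 0) := by
  classical
  have hrowA : ∀ i : ZMod n, A i = 0 ↔ A i (i + tA) = 0 := by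
    intro i
    constructor
    · intro h; rw [h]; rfl
    · intro h; funext k
      by_cases hk : k = i + tA
      · rw [hk, h]; rfl
      · by_contra hne
        have := hA i k hne
        exact hk (by rw [← this]; ring)
  have hmul : ∀ i k, (A * B) i k = A i (i + tA) * B (i + tA) k := by
    intro i k
    rw [Matrix.mul_apply]
    apply Finset.sum_eq_single (i + tA)
    · intro j _ hj
      have hz : A i j = 0 := by
        by_contra hne
        exact hj (by have := hA i j hne; rw [← this]; ring)
      rw [hz, zero_mul]
    · intro h; exact absurd (Finset.mem_univ _) h
  have hrowAB : ∀ i, (A * B) i = 0 ↔ (A i (i + tA) = 0 ∨ B (i + tA) = 0) := by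
    intro i
    constructor
    · intro h
      by_cases hA0 : A i (i + tA) = 0
      · exact Or.inl hA0
      · right; funext k
        have h2 := congrFun h k
        rw [hmul] at h2
        simp only [Pi.zero_apply] at h2 ⊢
        exact (mul_eq_zero.mp h2).resolve_left hA0
    · intro h; funext k
      simp only [Pi.zero_apply]
      rw [hmul]
      rcases h with h | h
      · rw [h, zero_mul]
      · have : B (i + tA) k = 0 := by rw [h]; rfl
        rw [this, mul_zero]
  set S : Set (ZMod n) := {i | A i = 0} with hS
  set T : Set (ZMod n) := {i | (A * B) i = 0} with hT
  have hsub : S ⊆ T := by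
    intro i hi
    exact (hrowAB i).mpr (Or.inl ((hrowA i).mp hi))
  have hfA : fRows A = S.ncard := by
    rw [fRows, Set.ncard_eq_toFinset_card']
    rw [Nat.card_eq_fintype_card]
    exact Fintype.card_of_subtype _ (by intro x; simp [hS])
  have hfAB : fRows (A * B) = T.ncard := by
    rw [fRows, Set.ncard_eq_toFinset_card']
    rw [Nat.card_eq_fintype_card]
    exact Fintype.card_of_subtype _ (by intro x; simp [hT])
  have hTfin : T.Finite := Set.toFinite T
  have key : 0 < falls A B ↔ ∃ i, i ∈ T ∧ i ∉ S := by
    rw [falls, hfA, hfAB]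
    constructor
    · intro h
      have hlt : S.ncard < T.ncard := by omega
      by_contra hcon
      push_neg at hcon
      have : T ⊆ S := fun i hi => hcon i hi
      have : T = S := Set.Subset.antisymm this hsub
      rw [this] at hlt; omega
    · rintro ⟨i, hiT, hiS⟩
      have hss : S ⊂ T := ⟨hsub, fun hc => hiS (hc hiT)⟩
      have := Set.ncard_lt_ncard hss hTfin
      omega
  rw [key]
  constructor
  · rintro ⟨i, hiT, hiS⟩
    have hAne : A i (i + tA) ≠ 0 := fun hz => hiS ((hrowA i).mpr hz)
    have hB0 : B (i + tA) = 0 := ((hrowAB i).mp hiT).resolve_left hAne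
    exact ⟨i + tA, ⟨i, hAne⟩, fun k => by rw [hB0]; rfl⟩
  · rintro ⟨j, ⟨i, hAij⟩, hBj⟩
    have hj : j = i + tA := by have := hA i j hAij; rw [← this]; ring
    subst hj
    refine ⟨i, (hrowAB i).mpr (Or.inr (funext hBj)), ?_⟩
    intro hiS
    exact hAij ((hrowA i).mp hiS)
end

section
/- Let A and B be homogeneous elements of M_n(F), of degrees deg(A) and deg(B) in Z_n. Then F(A,B) ≤ f_B. Moreover, F(A,B) = f_B if and only if for every i such that the i-th row of A is zero, the (i + deg(A))-th row of B (index taken modulo n) is nonzero. -/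
open scoped BigOperators

/-- for homogeneous `A`, `B` in `M_n(F)`, `F(A,B) ≤ f_B`, with equality
iff for every `i` with the `i`-th row of `A` zero, the `(i + deg A)`-th row of `B` is
nonzero. -/
theorem falls_le_fRows (F : Type*) [Field F] [CharZero F] (n : ℕ) [NeZero n]
    (tA tB : ZMod n) (A B : Matrix (ZMod n) (ZMod n) F)
    (hA : A ∈ matGr F n tA) (hB : B ∈ matGr F n tB) :
    falls A B ≤ fRows B ∧
    (falls A B = fRows B ↔ ∀ i : ZMod n, A i = 0 → B (i + tA) ≠ 0) := by
  classical
  -- row formula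
  have key : ∀ i : ZMod n, (A * B) i = 0 ↔ A i = 0 ∨ B (i + tA) = 0 := by
    intro i
    have hAi : ∀ k, k ≠ i + tA → A i k = 0 := by
      intro k hk
      by_contra h
      apply hk
      have := hA i k h
      rw [← this]; ring
    have hrow : ∀ j, (A * B) i j = A i (i + tA) * B (i + tA) j := by
      intro j
      rw [Matrix.mul_apply]
      rw [Finset.sum_eq_single (i + tA)]
      · intro k _ hk; rw [hAi k hk, zero_mul]
      · intro h; exact absurd (Finset.mem_univ _) h
    have hAeq : A i = 0 ↔ A i (i + tA) = 0 := by
      constructor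
      · intro h; rw [h]; rfl
      · intro h; funext k
        by_cases hk : k = i + tA
        · rw [hk, h]; rfl
        · rw [hAi k hk]; rfl
    constructor
    · intro h
      by_cases hA0 : A i (i + tA) = 0
      · exact Or.inl (hAeq.2 hA0)
      · right; funext j
        have := congrFun h j
        rw [hrow j] at this
        have := mul_eq_zero.1 this
        simp only [Pi.zero_apply]
        tauto
    · intro h; funext j
      rw [Pi.zero_apply, hrow j]
      rcases h with h | h
      · rw [hAeq.1 h, zero_mul]
      · rw [show B (i + tA) j = 0 from congrFun h j, mul_zero]
  -- counting
  have cardeq : ∀ (C : Matrix (ZMod n) (ZMod n) F),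
      fRows C = (Finset.univ.filter fun i => C i = 0).card := by
    intro C
    rw [fRows, Nat.card_eq_fintype_card, Fintype.card_subtype]
  set sa := Finset.univ.filter fun i : ZMod n => A i = 0 with hsa
  set sb' := Finset.univ.filter fun i : ZMod n => B (i + tA) = 0 with hsb'
  have hab : (Finset.univ.filter fun i : ZMod n => (A * B) i = 0) = sa ∪ sb' := by
    ext i
    simp only [hsa, hsb', Finset.mem_union, Finset.mem_filter, Finset.mem_univ, true_and]
    exact key i
  have hbcard : fRows B = sb'.card := by
    rw [fRows]
    have : Nat.card {i : ZMod n // B i = 0} = Nat.card {i : ZMod n // B (i + tA) = 0} := by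
      exact Nat.card_congr ((Equiv.addRight tA).subtypeEquiv (fun i => Iff.rfl)).symm
    rw [this, Nat.card_eq_fintype_card, Fintype.card_subtype]
  have hacard : fRows A = sa.card := cardeq A
  have habcard : fRows (A * B) = (sa ∪ sb').card := by rw [cardeq]; convert congrArg Finset.card hab using 2; ext i; simp only [Finset.mem_filter]
  have hsub : sa ⊆ sa ∪ sb' := Finset.subset_union_left
  have hle : sa.card ≤ (sa ∪ sb').card := Finset.card_le_card hsub
  have hunion : (sa ∪ sb').card + (sa ∩ sb').card = sa.card + sb'.card :=
    Finset.card_union_add_card_inter sa sb'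
  have hfalls : falls A B = sb'.card - (sa ∩ sb').card := by
    rw [falls, habcard, hacard]; omega
  have hinterle : (sa ∩ sb').card ≤ sb'.card :=
    Finset.card_le_card Finset.inter_subset_right
  constructor
  · rw [hfalls, hbcard]; omega
  · rw [hfalls, hbcard]
    have hiff : (sa ∩ sb').card = 0 ↔ ∀ i : ZMod n, A i = 0 → B (i + tA) ≠ 0 := by
      rw [Finset.card_eq_zero, Finset.eq_empty_iff_forall_notMem]
      constructor
      · intro h i hAi hBi
        exact h i (by simp [hsa, hsb', Finset.mem_inter, hAi, hBi])
      · intro h i hi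
        simp only [hsa, hsb', Finset.mem_inter, Finset.mem_filter, Finset.mem_univ,
          true_and] at hi
        exact h i hi.1 hi.2
    rw [← hiff]
    omega
end

section
/- Let m = x_1⋯x_t be a graded monomial with deg(x_i) = g_i for each i, and let M = G_1⋯G_t be a product of pairwise distinct generic matrices of BT(d_1,…,d_m;F) with deg(G_i) = g_i. Then m is a graded monomial identity of BT(d_1,…,d_m;F) if and only if there exist submonomials M_1,…,M_l of M with M = M_1⋯M_l such that, writing α_i = F(M_1⋯M_{i−1}, M_i) for i ∈ {2,…,l}, one has Σ_{i=2}^{l} α_i = n − f_{M_1}. -/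
open scoped BigOperators

/-- The product of the first `j` generic matrices `G_{r 0}^{(g 0)}, G_{r 1}^{(g 1)}, …`. -/
noncomputable def genPrefix (F : Type*) [Field F] (n : ℕ) [NeZero n] (d : ℕ → ℕ)
    (g : ℕ → ZMod n) (r : ℕ → ℕ) (j : ℕ) :
    Matrix (ZMod n) (ZMod n) (MvPolynomial ((ZMod n × ZMod n) × ℕ) F) :=
  ((List.range j).map fun i => genBT F n d (g i) (r i)).prod

section Aux
variable {n : ℕ} [NeZero n]

lemma fRows_eq_ncard {R : Type*} [Zero R] (A : Matrix (ZMod n) (ZMod n) R) :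
    fRows A = Set.ncard {i | A i = 0} := by
  exact (Nat.card_coe_set_eq _).symm

lemma fRows_le {R : Type*} [Zero R] (A : Matrix (ZMod n) (ZMod n) R) : fRows A ≤ n := by
  rw [fRows_eq_ncard]
  calc Set.ncard {i | A i = 0} ≤ (Set.univ : Set (ZMod n)).ncard :=
        Set.ncard_le_ncard (Set.subset_univ _) Set.finite_univ
    _ = n := by rw [Set.ncard_univ, Nat.card_eq_fintype_card, ZMod.card]

lemma fRows_le_mul {R : Type*} [CommRing R] (A B : Matrix (ZMod n) (ZMod n) R) :
    fRows A ≤ fRows (A * B) := by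
  rw [fRows_eq_ncard, fRows_eq_ncard]
  apply Set.ncard_le_ncard _ (Set.toFinite _)
  intro i hi
  simp only [Set.mem_setOf_eq] at hi ⊢
  funext j
  simp only [Matrix.mul_apply, Matrix.zero_apply]
  have : ∀ k, A i k = 0 := fun k => congrFun hi k
  simp [this]

lemma fRows_eq_n_iff {R : Type*} [Zero R] (A : Matrix (ZMod n) (ZMod n) R) :
    fRows A = n ↔ A = 0 := by
  constructor
  · intro h
    rw [fRows_eq_ncard] at h
    have huniv : (Set.univ : Set (ZMod n)) = {i : ZMod n | A i = 0} :=
      Set.eq_of_subset_of_ncard_le (Set.subset_univ _)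
        (by rw [h, Set.ncard_univ, Nat.card_eq_fintype_card, ZMod.card]) (Set.toFinite _) |>.symm
    ext i j
    have : A i = 0 := by
      have : i ∈ {i : ZMod n | A i = 0} := huniv ▸ Set.mem_univ i
      exact this
    simp [congrFun this j]
  · intro h
    subst h
    rw [fRows_eq_ncard]
    have : {i : ZMod n | (0 : Matrix (ZMod n) (ZMod n) R) i = 0} = Set.univ := by
      ext i; simp [Matrix.zero_apply]
      rfl
    rw [this, Set.ncard_univ, Nat.card_eq_fintype_card, ZMod.card]

end Aux

section Aux2
variable (F : Type*) [Field F] (n : ℕ) [NeZero n]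

lemma genPrefix_add (d : ℕ → ℕ) (g : ℕ → ZMod n) (r : ℕ → ℕ) (a b : ℕ) :
    genPrefix F n d g r (a + b) =
      genPrefix F n d g r a *
        ((List.range b).map fun i => genBT F n d (g (a + i)) (r (a + i))).prod := by
  simp [genPrefix, List.range_add, List.map_map, Function.comp_def]

/-- Telescoping sum of truncated differences for a function monotone on `[0, l]`. -/
lemma tele_sum (G : ℕ → ℕ) :
    ∀ l : ℕ, 1 ≤ l → (∀ i j : ℕ, i ≤ j → j ≤ l → G i ≤ G j) →
      ∑ i ∈ Finset.Ico 2 (l + 1), (G i - G (i - 1)) = G l - G 1 := by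
  intro l
  induction l with
  | zero => omega
  | succ k ih =>
    intro _ hmono
    rcases Nat.eq_or_lt_of_le (show 1 ≤ k + 1 by omega) with h1 | h1
    · rw [← h1]; simp
    · have hk : 1 ≤ k := by omega
      rw [Finset.sum_Ico_succ_top (by omega)]
      rw [ih hk (fun i j hij hj => hmono i j hij (by omega))]
      have e1 : G 1 ≤ G k := hmono 1 k hk (by omega)
      have e2 : G k ≤ G (k + 1) := hmono k (k + 1) (by omega) (le_refl _)
      simp only [Nat.add_sub_cancel]
      omega

end Aux2

section Aux3
variable (F : Type*) [Field F] (n : ℕ) [NeZero n]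

lemma lift_mono {B : Type*} [Ring B] [Algebra F B] (σ : ZMod n × ℕ → B)
    (w : List (ZMod n × ℕ)) :
    FreeAlgebra.lift F σ (mono F n w) = (w.map σ).prod := by
  rw [mono, map_list_prod, List.map_map]
  congr 1
  apply List.map_congr_left
  intro p _
  simp [FreeAlgebra.lift_ι_apply]

lemma map_genPrefix (d : ℕ → ℕ) (g : ℕ → ZMod n) (r : ℕ → ℕ) (t : ℕ)
    (a : (ZMod n × ZMod n) × ℕ → F) :
    (genPrefix F n d g r t).map (MvPolynomial.eval a) =
      ((List.range t).map fun i => (genBT F n d (g i) (r i)).map (MvPolynomial.eval a)).prod := by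
  have h := map_list_prod ((MvPolynomial.eval a).mapMatrix :
      Matrix (ZMod n) (ZMod n) (MvPolynomial ((ZMod n × ZMod n) × ℕ) F) →+*
      Matrix (ZMod n) (ZMod n) F)
    ((List.range t).map fun i => genBT F n d (g i) (r i))
  simpa [genPrefix, List.map_map, Function.comp_def, RingHom.mapMatrix_apply] using h

variable [CharZero F]

lemma identity_iff_genPrefix_zero (d : ℕ → ℕ) (t : ℕ)
    (v : ℕ → ZMod n × ℕ) (hv : ((List.range t).map v).Nodup)
    (r : ℕ → ℕ) (hr : Set.InjOn r {i | i < t}) :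
    IsGIdentity F n (BTgr F n d) (mono F n ((List.range t).map v)) ↔
      genPrefix F n d (fun j => (v j).1) r t = 0 := by
  have hvinj : ∀ i j : ℕ, i < t → j < t → v i = v j → i = j := by
    intro i j hi hj hij
    exact List.inj_on_of_nodup_map hv (List.mem_range.mpr hi) (List.mem_range.mpr hj) hij
  constructor
  · -- identity → generic product = 0
    intro h
    suffices hs : ∀ a : (ZMod n × ZMod n) × ℕ → F,
        (genPrefix F n d (fun j => (v j).1) r t).map (MvPolynomial.eval a) = 0 by
      refine Matrix.ext fun p q => ?_
      rw [Matrix.zero_apply]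
      refine MvPolynomial.funext (R := F) fun a => ?_
      have := congrFun (congrFun (hs a) p) q
      simpa [Matrix.map_apply] using this
    intro a
    rw [map_genPrefix]
    set σ : ZMod n × ℕ → Matrix (ZMod n) (ZMod n) F := fun p =>
      if hx : ∃ i, i < t ∧ v i = p
      then (genBT F n d p.1 (r hx.choose)).map (MvPolynomial.eval a) else 0 with hσdef
    have hσ : ∀ p, σ p ∈ BTgr F n d p.1 := by
      intro p
      rw [hσdef]
      dsimp only
      split_ifs with hx
      · intro i j hij
        by_contra hc
        apply hij
        simp only [Matrix.map_apply, genBT, Matrix.of_apply]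
        rw [if_neg hc]
        simp
      · intro i j hij
        simp at hij
    have hkey := h σ hσ
    rw [lift_mono] at hkey
    rw [← hkey]
    congr 1
    rw [List.map_map]
    apply List.map_congr_left
    intro i hi
    rw [List.mem_range] at hi
    have hx : ∃ j, j < t ∧ v j = v i := ⟨i, hi, rfl⟩
    have hch : hx.choose = i :=
      hvinj _ _ hx.choose_spec.1 hi hx.choose_spec.2
    simp only [Function.comp_apply, hσdef, dif_pos hx, hch]
  · -- generic product = 0 → identity
    intro h σ hσ
    rw [lift_mono]
    set a : (ZMod n × ZMod n) × ℕ → F := fun x =>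
      if hx : ∃ i, i < t ∧ r i = x.2 then σ (v hx.choose) x.1.1 x.1.2 else 0 with hadef
    have key : ∀ i < t, (genBT F n d (v i).1 (r i)).map (MvPolynomial.eval a) = σ (v i) := by
      intro i hi
      ext p q
      simp only [Matrix.map_apply, genBT, Matrix.of_apply]
      split_ifs with hc
      · rw [MvPolynomial.eval_X]
        have hx : ∃ j, j < t ∧ r j = r i := ⟨i, hi, rfl⟩
        have hch : hx.choose = i :=
          hr hx.choose_spec.1 hi hx.choose_spec.2
        rw [hadef]
        simp only [dif_pos hx, hch]
      · rw [eq_comm]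
        by_contra hne
        exact hc (hσ (v i) p q hne)
    have : ((List.range t).map v).map σ =
        (List.range t).map fun i => (genBT F n d (v i).1 (r i)).map (MvPolynomial.eval a) := by
      rw [List.map_map]
      apply List.map_congr_left
      intro i hi
      rw [List.mem_range] at hi
      exact (key i hi).symm
    rw [this, ← map_genPrefix, h]
    simp

end Aux3

/-- a graded monomial `m = x_1⋯x_t` (with pairwise distinct variables
`v 0, …, v (t-1)`) is a graded monomial identity of `BT(d_1,…,d_m;F)` if and only if
the corresponding product `M = G_1⋯G_t` of pairwise distinct generic matrices admits
a decomposition `M = M_1⋯M_l` into (nonempty, consecutive) submonomials, given by cut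
points `c 0 = 0 < c 1 < ⋯ < c l = t`, such that the numbers of falls
`α_i = F(M_1⋯M_{i-1}, M_i)`, `i = 2,…,l`, satisfy `Σ_{i=2}^{l} α_i = n - f_{M_1}`. -/
theorem monomial_identity_iff_falls_decomposition
    (F : Type*) [Field F] [CharZero F] (n : ℕ) [NeZero n]
    (m : ℕ) (hm : 0 < m) (d : ℕ → ℕ) (hd : ∀ k < m, 0 < d k)
    (hsum : ∑ k ∈ Finset.range m, d k = n)
    (t : ℕ) (ht : 0 < t) (v : ℕ → ZMod n × ℕ) (hv : ((List.range t).map v).Nodup)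
    (r : ℕ → ℕ) (hr : Set.InjOn r {i | i < t}) :
    IsGIdentity F n (BTgr F n d) (mono F n ((List.range t).map v)) ↔
      ∃ l : ℕ, 0 < l ∧ ∃ c : ℕ → ℕ, c 0 = 0 ∧ c l = t ∧ (∀ i < l, c i < c (i + 1)) ∧
        ∑ i ∈ Finset.Ico 2 (l + 1),
            (fRows (genPrefix F n d (fun j => (v j).1) r (c i))
              - fRows (genPrefix F n d (fun j => (v j).1) r (c (i - 1))))
          = n - fRows (genPrefix F n d (fun j => (v j).1) r (c 1)) := by
  rw [identity_iff_genPrefix_zero F n d t v hv r hr]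
  constructor
  · intro h
    have hf : fRows (genPrefix F n d (fun j => (v j).1) r t) = n :=
      (fRows_eq_n_iff _).mpr h
    refine ⟨1, one_pos, fun i => if i = 0 then 0 else t, rfl, by simp, ?_, ?_⟩
    · intro i hi
      interval_cases i
      simpa using ht
    · simp only [Finset.Ico_self, Finset.sum_empty, if_neg (one_ne_zero)]
      rw [hf, Nat.sub_self]
  · rintro ⟨l, hl, c, h0, hcl, hstep, hsum⟩
    set G : ℕ → ℕ := fun i => fRows (genPrefix F n d (fun j => (v j).1) r (c i)) with hG
    have hcmono : ∀ k ≤ l, ∀ i ≤ k, c i ≤ c k := by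
      intro k
      induction k with
      | zero => intro _ i hi; rw [Nat.le_zero.mp hi]
      | succ k ih =>
        intro hk i hi
        rcases Nat.eq_or_lt_of_le hi with h | h
        · rw [h]
        · exact le_trans (ih (by omega) i (by omega)) (le_of_lt (hstep k (by omega)))
    have hGmono : ∀ i j : ℕ, i ≤ j → j ≤ l → G i ≤ G j := by
      intro i j hij hj
      have hc : c i ≤ c j := hcmono j hj i hij
      obtain ⟨k, hk⟩ := Nat.exists_eq_add_of_le hc
      rw [hG]
      dsimp only
      rw [hk, genPrefix_add]
      exact fRows_le_mul _ _
    have htel := tele_sum G l hl hGmono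
    rw [hG] at htel
    dsimp only at htel
    rw [htel] at hsum
    have h1 : fRows (genPrefix F n d (fun j => (v j).1) r (c 1)) ≤
        fRows (genPrefix F n d (fun j => (v j).1) r (c l)) := hGmono 1 l hl (le_refl l)
    have h2 : fRows (genPrefix F n d (fun j => (v j).1) r (c l)) ≤ n := fRows_le _
    have h4 : fRows (genPrefix F n d (fun j => (v j).1) r (c 1)) ≤ n := fRows_le _
    have hsum2 : fRows (genPrefix F n d (fun j => (v j).1) r (c l))
        - fRows (genPrefix F n d (fun j => (v j).1) r (c 1))
        = n - fRows (genPrefix F n d (fun j => (v j).1) r (c 1)) := hsum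
    have h3 : fRows (genPrefix F n d (fun j => (v j).1) r (c l)) = n := by
      clear hsum htel hGmono hcmono hstep hG
      omega
    rw [hcl] at h3
    exact (fRows_eq_n_iff _).mp h3
end

section
/- Let M = Z_1 Z_2 C_2 Z_3 C_3 ⋯ C_{l−1} Z_l C_l, where each Z_i is a single generic matrix of BT(d_1,…,d_m;F) of degree z_i, each C_i is a (possibly empty) product of generic matrices of total degree c_i, and all generic matrices occurring are pairwise distinct. Let M' = Y'_1 Y'_2 X'_2 Y'_3 X'_3 ⋯ Y'_l X'_l, where the Y'_i and X'_i are pairwise distinct single generic matrices with deg(Y'_i) = z_i and deg(X'_i) = c_i. Then for each i ∈ {2,…,l} one has F(Z_1 Z_2 C_2 ⋯ C_{i−1}, Z_i) ≤ F(Y'_1 Y'_2 X'_2 ⋯ X'_{i−1}, Y'_i). -/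
open scoped BigOperators

/-- The word of the product `M = Z_1 C_1 Z_2 C_2 ⋯` (with `C_0 = []` this is
`Z_1 Z_2 C_2 ⋯ Z_l C_l`, `0`-indexed). -/
def wordM (n : ℕ) (l : ℕ) (Zw : ℕ → ZMod n × ℕ) (Cw : ℕ → List (ZMod n × ℕ)) :
    List (ZMod n × ℕ) :=
  (List.range l).flatMap fun i => Zw i :: Cw i

/-- The word of the product `M' = Y'_1 Y'_2 X'_2 ⋯ Y'_l X'_l` (`0`-indexed). -/
def wordM' (n : ℕ) (l : ℕ) (Yw Xw : ℕ → ZMod n × ℕ) : List (ZMod n × ℕ) :=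
  (List.range l).flatMap fun i => if i = 0 then [Yw i] else [Yw i, Xw i]

/-- The prefix `Z_1 C_1 ⋯ Z_i C_i` of `M`, as a product of generic matrices. -/
noncomputable def prefM (F : Type*) [Field F] (n : ℕ) [NeZero n] (d : ℕ → ℕ)
    (Zw : ℕ → ZMod n × ℕ) (Cw : ℕ → List (ZMod n × ℕ)) (i : ℕ) :
    Matrix (ZMod n) (ZMod n) (MvPolynomial ((ZMod n × ZMod n) × ℕ) F) :=
  ((List.range i).map fun j =>
    genBT F n d (Zw j).1 (Zw j).2 * ((Cw j).map fun p => genBT F n d p.1 p.2).prod).prod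

/-- The prefix `Y'_1 Y'_2 X'_2 ⋯ Y'_i X'_i` of `M'`, as a product of generic matrices. -/
noncomputable def prefM' (F : Type*) [Field F] (n : ℕ) [NeZero n] (d : ℕ → ℕ)
    (Yw Xw : ℕ → ZMod n × ℕ) (i : ℕ) :
    Matrix (ZMod n) (ZMod n) (MvPolynomial ((ZMod n × ZMod n) × ℕ) F) :=
  ((List.range i).map fun j =>
    if j = 0 then genBT F n d (Yw j).1 (Yw j).2
    else genBT F n d (Yw j).1 (Yw j).2 * genBT F n d (Xw j).1 (Xw j).2).prod


section AuxFalls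

noncomputable def Pw (F : Type*) [Field F] (n : ℕ) [NeZero n] (d : ℕ → ℕ)
    (w : List (ZMod n × ℕ)) :
    Matrix (ZMod n) (ZMod n) (MvPolynomial ((ZMod n × ZMod n) × ℕ) F) :=
  (w.map fun x => genBT F n d x.1 x.2).prod

def okw (d : ℕ → ℕ) {n : ℕ} : ZMod n → List (ZMod n) → Prop
  | _, [] => True
  | p, g :: w => blockOf d p.val ≤ blockOf d (p + g).val ∧ okw d (p + g) w

@[simp] lemma okw_nil (d : ℕ → ℕ) {n : ℕ} (p : ZMod n) : okw d p [] := trivial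

@[simp] lemma okw_cons (d : ℕ → ℕ) {n : ℕ} (p g : ZMod n) (w : List (ZMod n)) :
    okw d p (g :: w) ↔ blockOf d p.val ≤ blockOf d (p + g).val ∧ okw d (p + g) w := Iff.rfl

lemma okw_append (d : ℕ → ℕ) {n : ℕ} (a b : List (ZMod n)) (p : ZMod n) :
    okw d p (a ++ b) ↔ okw d p a ∧ okw d (p + a.sum) b := by
  induction a generalizing p with
  | nil => simp
  | cons g a ih => simp [ih, add_assoc, and_assoc]

lemma okw_le (d : ℕ → ℕ) {n : ℕ} (w : List (ZMod n)) (p : ZMod n) (h : okw d p w) :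
    blockOf d p.val ≤ blockOf d (p + w.sum).val := by
  induction w generalizing p with
  | nil => simpa using le_refl _
  | cons g w ih =>
    obtain ⟨h1, h2⟩ := h
    calc blockOf d p.val ≤ blockOf d (p + g).val := h1
      _ ≤ blockOf d ((p + g) + w.sum).val := ih _ h2
      _ = blockOf d (p + (g :: w).sum).val := by rw [List.sum_cons, ← add_assoc]

lemma Pw_append (F : Type*) [Field F] (n : ℕ) [NeZero n] (d : ℕ → ℕ)
    (a b : List (ZMod n × ℕ)) :
    Pw F n d (a ++ b) = Pw F n d a * Pw F n d b := by
  simp [Pw]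

lemma row_Pw (F : Type*) [Field F] (n : ℕ) [NeZero n] (d : ℕ → ℕ)
    (w : List (ZMod n × ℕ)) (p : ZMod n) :
    ∃ c, (∀ q, Pw F n d w p q = if q = p + (w.map Prod.fst).sum then c else 0) ∧
      (c ≠ 0 ↔ okw d p (w.map Prod.fst)) := by
  classical
  induction w generalizing p with
  | nil =>
    refine ⟨1, fun q => ?_, by simp⟩
    simp [Pw, Matrix.one_apply, eq_comm]
  | cons a w ih =>
    obtain ⟨c, hc, hok⟩ := ih (p + a.1)
    refine ⟨(if blockOf d p.val ≤ blockOf d (p + a.1).val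
        then MvPolynomial.X ((p, p + a.1), a.2) else 0) * c, fun q => ?_, ?_⟩
    · have h1 : Pw F n d (a :: w) p q = ∑ k, genBT F n d a.1 a.2 p k * Pw F n d w k q := by
        simp [Pw, Matrix.mul_apply]
      rw [h1, Finset.sum_eq_single (p + a.1)]
      · have hg : genBT F n d a.1 a.2 p (p + a.1) =
            if blockOf d p.val ≤ blockOf d (p + a.1).val
            then MvPolynomial.X ((p, p + a.1), a.2) else 0 := by
          simp [genBT, add_sub_cancel_left]
        rw [hg, hc q, mul_ite, mul_zero, List.map_cons, List.sum_cons, ← add_assoc]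
      · intro k _ hk
        have : genBT F n d a.1 a.2 p k = 0 := by
          simp only [genBT, Matrix.of_apply, ite_eq_right_iff]
          rintro ⟨h, -⟩
          exact absurd (by rw [eq_add_of_sub_eq h, add_comm]) hk
        rw [this, zero_mul]
      · intro h; exact absurd (Finset.mem_univ _) h
    · rcases le_or_gt (blockOf d p.val) (blockOf d (p + a.1).val) with hb | hb
      · rw [if_pos hb]
        constructor
        · intro h
          exact (okw_cons d p a.1 _).mpr ⟨hb, hok.mp (right_ne_zero_of_mul h)⟩
        · intro h
          exact mul_ne_zero (MvPolynomial.X_ne_zero _) (hok.mpr ((okw_cons d p a.1 _).mp h).2)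
      · rw [if_neg (not_le.mpr hb), zero_mul]
        simp [okw_cons, not_le.mpr hb]

lemma row_eq_zero_iff (F : Type*) [Field F] (n : ℕ) [NeZero n] (d : ℕ → ℕ)
    (w : List (ZMod n × ℕ)) (p : ZMod n) :
    Pw F n d w p = 0 ↔ ¬ okw d p (w.map Prod.fst) := by
  obtain ⟨c, hc, hok⟩ := row_Pw F n d w p
  constructor
  · intro h hokw
    have h2 := congrFun h (p + (w.map Prod.fst).sum)
    rw [hc, if_pos rfl] at h2
    exact (hok.mpr hokw) h2
  · intro h
    have hc0 : c = 0 := by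
      by_contra h'; exact h (hok.mp h')
    funext q
    rw [hc q, hc0]
    simp

lemma fRows_Pw (F : Type*) [Field F] (n : ℕ) [NeZero n] (d : ℕ → ℕ)
    (w : List (ZMod n × ℕ)) :
    fRows (Pw F n d w) = Nat.card {p : ZMod n // ¬ okw d p (w.map Prod.fst)} :=
  Nat.card_congr (Equiv.subtypeEquivRight (row_eq_zero_iff F n d w))

lemma falls_Pw (F : Type*) [Field F] (n : ℕ) [NeZero n] (d : ℕ → ℕ)
    (w : List (ZMod n × ℕ)) (g : ZMod n) (r : ℕ) :
    falls (Pw F n d w) (genBT F n d g r) =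
      Nat.card {p : ZMod n // okw d p (w.map Prod.fst) ∧
        ¬ blockOf d (p + (w.map Prod.fst).sum).val
          ≤ blockOf d (p + (w.map Prod.fst).sum + g).val} := by
  have hmul : Pw F n d w * genBT F n d g r = Pw F n d (w ++ [(g, r)]) := by
    rw [Pw_append]; simp [Pw]
  rw [falls, hmul, fRows_Pw, fRows_Pw]
  have hiff : ∀ p : ZMod n, okw d p ((w ++ [(g,r)]).map Prod.fst) ↔
      okw d p (w.map Prod.fst) ∧ blockOf d (p + (w.map Prod.fst).sum).val
        ≤ blockOf d (p + (w.map Prod.fst).sum + g).val := by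
    intro p
    rw [List.map_append, okw_append]
    simp
  have e1 : Nat.card {p : ZMod n // ¬ okw d p ((w ++ [(g,r)]).map Prod.fst)}
      = ({p : ZMod n | ¬ okw d p (w.map Prod.fst)} ∪ {p : ZMod n | okw d p (w.map Prod.fst) ∧
          ¬ blockOf d (p + (w.map Prod.fst).sum).val
            ≤ blockOf d (p + (w.map Prod.fst).sum + g).val}).ncard := by
    rw [← Nat.card_coe_set_eq]
    apply Nat.card_congr
    apply Equiv.subtypeEquivRight
    intro p
    simp only [hiff p, Set.mem_union, Set.mem_setOf_eq]
    tauto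
  rw [e1, Set.ncard_union_eq ?_ (Set.toFinite _) (Set.toFinite _)]
  · rw [show Nat.card {p : ZMod n // ¬ okw d p (w.map Prod.fst)}
        = ({p : ZMod n | ¬ okw d p (w.map Prod.fst)}).ncard from
        (Nat.card_coe_set_eq _).symm,
      show Nat.card {p : ZMod n // okw d p (w.map Prod.fst) ∧
          ¬ blockOf d (p + (w.map Prod.fst).sum).val
            ≤ blockOf d (p + (w.map Prod.fst).sum + g).val}
        = ({p : ZMod n | okw d p (w.map Prod.fst) ∧
          ¬ blockOf d (p + (w.map Prod.fst).sum).val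
            ≤ blockOf d (p + (w.map Prod.fst).sum + g).val}).ncard from
        (Nat.card_coe_set_eq _).symm]
    omega
  · rw [Set.disjoint_left]
    intro p hp hp2
    exact hp hp2.1

lemma prefM_eq (F : Type*) [Field F] (n : ℕ) [NeZero n] (d : ℕ → ℕ)
    (Zw : ℕ → ZMod n × ℕ) (Cw : ℕ → List (ZMod n × ℕ)) (i : ℕ) :
    prefM F n d Zw Cw i = Pw F n d ((List.range i).flatMap fun j => Zw j :: Cw j) := by
  induction i with
  | zero => simp [prefM, Pw]
  | succ i ih =>
    rw [prefM, List.range_succ, List.map_append, List.prod_append, ← prefM, ih,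
      List.flatMap_append, Pw_append]
    congr 1
    simp [Pw]

lemma prefM'_eq (F : Type*) [Field F] (n : ℕ) [NeZero n] (d : ℕ → ℕ)
    (Yw Xw : ℕ → ZMod n × ℕ) (i : ℕ) :
    prefM' F n d Yw Xw i
      = Pw F n d ((List.range i).flatMap fun j => if j = 0 then [Yw j] else [Yw j, Xw j]) := by
  induction i with
  | zero => simp [prefM', Pw]
  | succ i ih =>
    rw [prefM', List.range_succ, List.map_append, List.prod_append, ← prefM', ih,
      List.flatMap_append, Pw_append]
    congr 1
    by_cases h : i = 0 <;> simp [Pw, h]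

lemma key_words (n : ℕ) [NeZero n] (d : ℕ → ℕ) (l : ℕ)
    (Zw : ℕ → ZMod n × ℕ) (Cw : ℕ → List (ZMod n × ℕ)) (hC0 : Cw 0 = [])
    (Yw Xw : ℕ → ZMod n × ℕ)
    (hY : ∀ i < l, (Yw i).1 = (Zw i).1)
    (hX : ∀ i, 1 ≤ i → i < l → (Xw i).1 = ((Cw i).map Prod.fst).sum) :
    ∀ k ≤ l,
      (((List.range k).flatMap fun j => (Zw j).1 :: (Cw j).map Prod.fst).sum
        = ((List.range k).flatMap fun j =>
            if j = 0 then [(Yw j).1] else [(Yw j).1, (Xw j).1]).sum)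
      ∧ ∀ p : ZMod n,
          okw d p ((List.range k).flatMap fun j => (Zw j).1 :: (Cw j).map Prod.fst)
          → okw d p ((List.range k).flatMap fun j =>
              if j = 0 then [(Yw j).1] else [(Yw j).1, (Xw j).1]) := by
  intro k
  induction k with
  | zero => intro _; simp
  | succ k ih =>
    intro hk
    have hk' : k ≤ l := Nat.le_of_succ_le hk
    have hkl : k < l := hk
    obtain ⟨ihs, ihok⟩ := ih hk'
    have hpiece_sum : ((Zw k).1 :: (Cw k).map Prod.fst).sum
        = (if k = 0 then [(Yw k).1] else [(Yw k).1, (Xw k).1]).sum := by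
      rcases Nat.eq_zero_or_pos k with h0 | hpos
      · subst h0
        simp [hC0, hY 0 hkl]
      · rw [if_neg (Nat.pos_iff_ne_zero.mp hpos)]
        simp [hY k hkl, hX k hpos hkl]
    constructor
    · rw [List.range_succ, List.flatMap_append, List.flatMap_append,
        List.sum_append, List.sum_append, ihs]
      simp only [List.flatMap_cons, List.flatMap_nil, List.append_nil]
      rw [hpiece_sum]
    · intro p hp
      rw [List.range_succ, List.flatMap_append] at hp ⊢
      rw [okw_append] at hp ⊢
      obtain ⟨h1, h2⟩ := hp
      refine ⟨ihok p h1, ?_⟩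
      simp only [List.flatMap_cons, List.flatMap_nil, List.append_nil] at h2 ⊢
      rw [← ihs]
      set q := p + ((List.range k).flatMap fun j => (Zw j).1 :: (Cw j).map Prod.fst).sum with hq
      rcases Nat.eq_zero_or_pos k with h0 | hpos
      · subst h0
        rw [if_pos rfl]
        rw [okw_cons]
        refine ⟨?_, trivial⟩
        rw [hY 0 hkl]
        exact h2.1
      · rw [if_neg (Nat.pos_iff_ne_zero.mp hpos)]
        obtain ⟨hb1, hb2⟩ := h2
        refine ⟨?_, ?_, trivial⟩
        · rw [hY k hkl]; exact hb1
        · rw [hY k hkl, hX k hpos hkl]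
          exact okw_le d _ _ hb2

end AuxFalls

/-- with `M = Z_1 Z_2 C_2 ⋯ Z_l C_l` and `M' = Y'_1 Y'_2 X'_2 ⋯ Y'_l X'_l`
products of pairwise distinct generic matrices of `BT(d_1,…,d_m;F)` with
`deg Y'_i = deg Z_i` and `deg X'_i = deg C_i`, one has, for each `i ∈ {2,…,l}`,
`F(Z_1 Z_2 C_2 ⋯ C_{i-1}, Z_i) ≤ F(Y'_1 Y'_2 X'_2 ⋯ X'_{i-1}, Y'_i)`. -/
theorem falls_le_of_contracted
    (F : Type*) [Field F] [CharZero F] (n : ℕ) [NeZero n]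
    (m : ℕ) (hm : 0 < m) (d : ℕ → ℕ) (hd : ∀ k < m, 0 < d k)
    (hsum : ∑ k ∈ Finset.range m, d k = n)
    (l : ℕ) (Zw : ℕ → ZMod n × ℕ) (Cw : ℕ → List (ZMod n × ℕ)) (hC0 : Cw 0 = [])
    (Yw Xw : ℕ → ZMod n × ℕ)
    (hnodM : (wordM n l Zw Cw).Nodup)
    (hnodM' : (wordM' n l Yw Xw).Nodup)
    (hY : ∀ i < l, (Yw i).1 = (Zw i).1)
    (hX : ∀ i, 1 ≤ i → i < l → (Xw i).1 = ((Cw i).map Prod.fst).sum) :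
    ∀ i, 1 ≤ i → i < l →
      falls (prefM F n d Zw Cw i) (genBT F n d (Zw i).1 (Zw i).2)
        ≤ falls (prefM' F n d Yw Xw i) (genBT F n d (Yw i).1 (Yw i).2) := by
  intro i hi1 hil
  have hm1 : ((List.range i).flatMap fun j => Zw j :: Cw j).map Prod.fst
      = (List.range i).flatMap fun j => (Zw j).1 :: (Cw j).map Prod.fst := by
    simp [List.map_flatMap]
  have hm2 : ((List.range i).flatMap fun j =>
        if j = 0 then [Yw j] else [Yw j, Xw j]).map Prod.fst
      = (List.range i).flatMap fun j =>
          if j = 0 then [(Yw j).1] else [(Yw j).1, (Xw j).1] := by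
    rw [List.map_flatMap]
    congr 1
    funext j
    split <;> simp
  obtain ⟨hs, hok⟩ := key_words n d l Zw Cw hC0 Yw Xw hY hX i (le_of_lt hil)
  rw [prefM_eq, prefM'_eq, falls_Pw, falls_Pw, hm1, hm2, hY i hil]
  apply Nat.card_le_card_of_injective
    (fun x => (⟨x.1, ⟨hok x.1 x.2.1, by rw [← hs]; exact x.2.2⟩⟩ :
      {p : ZMod n // okw d p ((List.range i).flatMap fun j =>
          if j = 0 then [(Yw j).1] else [(Yw j).1, (Xw j).1]) ∧
        ¬ blockOf d (p + ((List.range i).flatMap fun j =>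
            if j = 0 then [(Yw j).1] else [(Yw j).1, (Xw j).1]).sum).val
          ≤ blockOf d (p + ((List.range i).flatMap fun j =>
              if j = 0 then [(Yw j).1] else [(Yw j).1, (Xw j).1]).sum + (Zw i).1).val}))
  intro a b hab
  have h' := congrArg Subtype.val hab
  exact Subtype.ext h'
end

section
/- Let r < n be a positive integer and m = x_1⋯x_r a graded monomial. Then the substitution S sending each x_t to the matrix Σ_{i=1}^{n−1} e_{i,j(i)} ∈ BT(n−1,1;F), where for each i the index j(i) ∈ {1,…,n} satisfies j(i) − i ≡ deg(x_t) (mod n), yields m|_S = Σ_{i∈I} e_{i,j(i)} with j(i) − i ≡ deg(m) (mod n), where I ⊆ {1,…,n−1} and |I| ≥ n − r. Moreover, if x_1⋯x_{r−1} contains no submonomial of degree 0 (i.e., no nonempty consecutive subproduct x_a⋯x_b with a ≤ b ≤ r−1 whose degrees sum to 0 in Z_n), then |I| = n − r. -/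
open scoped BigOperators

/-- for a graded monomial `m = x_1⋯x_r` with `0 < r < n` and
`deg x_t = g (t-1)`, the canonical substitution `x_t ↦ Σ_{i=1}^{n-1} e_{i,i+deg x_t}`
evaluates `m` to `Σ_{i ∈ I} e_{i, i + deg m}` for a set `I` of rows avoiding the last
row, with `|I| ≥ n - r`; and if `x_1⋯x_{r-1}` contains no submonomial of degree `0`,
then `|I| = n - r`. -/
theorem canonical_substitution_eval
    (F : Type*) [Field F] [CharZero F] (n : ℕ) (hn : 2 ≤ n) [NeZero n]
    (r : ℕ) (hr : 0 < r) (hrn : r < n) (g : ℕ → ZMod n) :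
    ∃ I : Finset (ZMod n), ((n - 1 : ℕ) : ZMod n) ∉ I ∧ n - r ≤ I.card ∧
      ((List.range r).map fun t => subMat F n (g t)).prod
        = ∑ i ∈ I, Matrix.single i (i + ∑ t ∈ Finset.range r, g t) (1 : F) ∧
      ((∀ a b : ℕ, a ≤ b → b < r - 1 → (∑ t ∈ Finset.Icc a b, g t) ≠ 0) →
        I.card = n - r) := by
  classical
  set last : ZMod n := ((n - 1 : ℕ) : ZMod n) with hlast
  set P : ℕ → ZMod n := fun s => ∑ t ∈ Finset.range s, g t with hPdef
  have key : ∀ m : ℕ, ((List.range m).map fun t => subMat F n (g t)).prod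
      = Matrix.of fun p q : ZMod n =>
          if q = p + P m ∧ ∀ s < m, p + P s ≠ last then (1:F) else 0 := by
    intro m
    induction m with
    | zero =>
        ext p q
        simp [Matrix.one_apply, P, eq_comm]
    | succ m ih =>
        rw [List.range_succ, List.map_append, List.prod_append, ih]
        ext p q
        simp only [List.map_cons, List.map_nil, List.prod_cons, List.prod_nil, mul_one]
        rw [Matrix.mul_apply]
        have hPm : P (m+1) = P m + g m := Finset.sum_range_succ g m
        by_cases hC : ∀ s < m, p + P s ≠ last
        · simp only [subMat, Matrix.of_apply, iff_true_intro hC, and_true, boole_mul]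
          rw [Finset.sum_ite_eq' Finset.univ (p + P m)]
          rw [if_pos (Finset.mem_univ _)]
          rw [← hlast]
          have hiff : ((p + P m ≠ last) ∧ q = p + P m + g m)
              ↔ (q = p + P (m+1) ∧ ∀ s < m + 1, p + P s ≠ last) := by
            rw [hPm]
            constructor
            · rintro ⟨h1, h2⟩
              refine ⟨by rw [h2, add_assoc], ?_⟩
              intro s hs
              rcases Nat.lt_succ_iff_lt_or_eq.mp hs with h | h
              · exact hC s h
              · subst h; exact h1
            · rintro ⟨h1, h2⟩
              exact ⟨h2 m (Nat.lt_succ_self m), by rw [h1, add_assoc]⟩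
          rw [if_congr hiff rfl rfl]
        · push_neg at hC
          obtain ⟨s, hs, hps⟩ := hC
          rw [Finset.sum_eq_zero, Matrix.of_apply, if_neg]
          · rintro ⟨-, h⟩
            exact h s (hs.trans (Nat.lt_succ_self m)) hps
          · intro k _
            rw [Matrix.of_apply, if_neg, zero_mul]
            rintro ⟨-, h⟩
            exact h s hs hps
  set B : Finset (ZMod n) := (Finset.range r).image (fun s => last - P s) with hBdef
  have hmem : ∀ i : ZMod n, i ∈ Bᶜ ↔ ∀ s < r, i + P s ≠ last := by
    intro i
    simp only [hBdef, Finset.mem_compl, Finset.mem_image, Finset.mem_range, not_exists,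
      not_and]
    constructor
    · intro h s hs heq
      exact h s hs (by rw [sub_eq_iff_eq_add]; exact heq.symm)
    · intro h s hs heq
      refine h s hs ?_
      rw [← heq]
      abel
  have hlastB : last ∈ B := by
    refine Finset.mem_image.mpr ⟨0, Finset.mem_range.mpr hr, ?_⟩
    simp [P]
  have hcard : Bᶜ.card = n - B.card := by
    rw [Finset.card_compl, ZMod.card]
  have hBle : B.card ≤ r := by
    refine Finset.card_image_le.trans ?_
    simp
  refine ⟨Bᶜ, ?_, ?_, ?_, ?_⟩
  · rw [Finset.mem_compl, not_not]
    exact hlastB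
  · omega
  · rw [key r]
    ext p q
    rw [Matrix.sum_apply]
    have hPr : (∑ t ∈ Finset.range r, g t) = P r := rfl
    simp only [Matrix.single, Matrix.of_apply, ite_and, hPr]
    rw [Finset.sum_ite_eq' Bᶜ p]
    by_cases hp : p ∈ Bᶜ
    · rw [if_pos hp]
      have h2 := (hmem p).mp hp
      simp only [iff_true_intro h2, if_true]
      rcases eq_or_ne q (p + P r) with he | he
      · rw [if_pos he, if_pos he.symm]
      · rw [if_neg he, if_neg (Ne.symm he)]
    · rw [if_neg hp]
      split_ifs with h1 h2
      · exact absurd ((hmem p).mpr h2) hp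
      · rfl
      · rfl
  · intro h
    have main : ∀ s s' : ℕ, s < s' → s' < r → last - P s = last - P s' → False := by
      intro s s' hlt hs' heq
      have hPeq : P s = P s' := sub_right_inj.mp heq
      have hsum : ∑ t ∈ Finset.Ico s s', g t = 0 := by
        rw [Finset.sum_Ico_eq_sub g hlt.le]
        have h1 : (∑ i ∈ Finset.range s', g i) = P s' := rfl
        have h2 : (∑ i ∈ Finset.range s, g i) = P s := rfl
        rw [h1, h2, ← hPeq, sub_self]
      have hIcc : Finset.Ico s s' = Finset.Icc s (s' - 1) := by
        rw [← Finset.Ico_add_one_right_eq_Icc]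
        congr 1
        omega
      exact h s (s' - 1) (by omega) (by omega) (hIcc ▸ hsum)
    have hinj : Set.InjOn (fun s => last - P s) (Finset.range r) := by
      intro s hs s' hs' heq
      simp only [Finset.coe_range, Set.mem_Iio] at hs hs'
      rcases lt_trichotomy s s' with hc | hc | hc
      · exact (main s s' hc hs' heq).elim
      · exact hc
      · exact (main s' s hc hs heq.symm).elim
    have hBr : B.card = r := by
      rw [hBdef, Finset.card_image_of_injOn hinj, Finset.card_range]
    omega
end

section
/- Let r < n be a positive integer and m = x_1⋯x_r a graded monomial in r variables (of arbitrary degrees in Z_n). Then m is not a graded monomial identity of BT(n−1,1;F); that is, there exist homogeneous elements a_1,…,a_r of BT(n−1,1;F) with deg(a_t) = deg(x_t) and a_1⋯a_r ≠ 0. -/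
open scoped BigOperators

lemma subMat_mem_BT1gr (F : Type*) [Field F] (n : ℕ) (g : ZMod n) :
    subMat F n g ∈ BT1gr F n g := by
  constructor
  · intro i j h
    simp only [subMat, Matrix.of_apply, ne_eq, ite_eq_right_iff, one_ne_zero] at h
    obtain ⟨-, rfl⟩ := by_contra fun hc => h fun a => absurd a hc
    ring
  · intro j _
    simp [subMat]

lemma prod_subMat_apply (F : Type*) [Field F] (n : ℕ) [NeZero n]
    (L : List (ZMod n)) (p : ZMod n)
    (hgood : ∀ k < L.length, p + (L.take k).sum ≠ ((n - 1 : ℕ) : ZMod n)) :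
    ∀ q, ((L.map (subMat F n)).prod) p q = if q = p + L.sum then 1 else 0 := by
  induction L generalizing p with
  | nil =>
    intro q
    simp only [List.map_nil, List.prod_nil, List.sum_nil, add_zero, Matrix.one_apply]
    by_cases h : q = p <;> simp [h, eq_comm]
    · exact fun hpq => h hpq.symm
  | cons g L ih =>
    intro q
    have hp : p ≠ ((n - 1 : ℕ) : ZMod n) := by
      simpa using hgood 0 (by simp)
    have hgood' : ∀ k < L.length, (p + g) + (L.take k).sum ≠ ((n - 1 : ℕ) : ZMod n) := by
      intro k hk
      have := hgood (k + 1) (by simpa using Nat.succ_lt_succ hk)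
      simpa [List.take_succ_cons, add_assoc] using this
    have key : ∀ k : ZMod n, subMat F n g p k = if k = p + g then 1 else 0 := by
      intro k; simp [subMat, hp]
    rw [List.map_cons, List.prod_cons, Matrix.mul_apply]
    have : ∀ k : ZMod n, subMat F n g p k * ((L.map (subMat F n)).prod) k q
        = if k = p + g then ((L.map (subMat F n)).prod) (p + g) q else 0 := by
      intro k
      rw [key k]
      by_cases h : k = p + g <;> simp [h]
    rw [Finset.sum_congr rfl fun k _ => this k, Finset.sum_ite_eq' Finset.univ (p + g)]
    simp [ih (p + g) hgood', add_assoc]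
    congr 1

lemma exists_good_start (n : ℕ) [NeZero n] (L : List (ZMod n)) (hL : L.length < n) :
    ∃ p : ZMod n, ∀ k < L.length, p + (L.take k).sum ≠ ((n - 1 : ℕ) : ZMod n) := by
  by_contra h
  push_neg at h
  set bad : Finset (ZMod n) :=
    (Finset.range L.length).image fun k => ((n - 1 : ℕ) : ZMod n) - (L.take k).sum with hbad
  have hsub : (Finset.univ : Finset (ZMod n)) ⊆ bad := by
    intro p _
    obtain ⟨k, hk, hpk⟩ := h p
    refine Finset.mem_image.2 ⟨k, Finset.mem_range.2 hk, ?_⟩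
    rw [← hpk]; ring
  have h1 : (Finset.univ : Finset (ZMod n)).card ≤ bad.card := Finset.card_le_card hsub
  have h2 : bad.card ≤ L.length := le_trans (Finset.card_image_le) (by simp)
  rw [Finset.card_univ, ZMod.card] at h1
  omega

/-- no graded monomial `m = x_1⋯x_r` in `r < n` (pairwise distinct)
variables is a graded monomial identity of `BT(n-1,1;F)`: there are homogeneous
elements `a_t` of `BT(n-1,1;F)` of the prescribed degrees with `a_1⋯a_r ≠ 0`. -/
theorem short_monomials_are_not_identities
    (F : Type*) [Field F] [CharZero F] (n : ℕ) (hn : 2 ≤ n) [NeZero n]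
    (r : ℕ) (hr : 0 < r) (hrn : r < n)
    (v : ℕ → ZMod n × ℕ) (hv : ((List.range r).map v).Nodup) :
    ¬ IsGIdentity F n (BT1gr F n) (mono F n ((List.range r).map v)) ∧
    ∃ a : ℕ → Matrix (ZMod n) (ZMod n) F,
      (∀ t < r, a t ∈ BT1gr F n (v t).1) ∧ ((List.range r).map a).prod ≠ 0 := by
  set L : List (ZMod n) := (List.range r).map fun t => (v t).1 with hL
  have hLlen : L.length < n := by simp [hL, hrn]
  obtain ⟨p, hp⟩ := exists_good_start n L hLlen
  have hne : ((L.map (subMat F n)).prod) ≠ 0 := by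
    intro h0
    have := prod_subMat_apply F n L p hp (p + L.sum)
    rw [h0] at this
    simp at this
  have hmapeq : ∀ σ : ZMod n × ℕ → Matrix (ZMod n) (ZMod n) F,
      FreeAlgebra.lift F σ (mono F n ((List.range r).map v))
        = (((List.range r).map v).map σ).prod := by
    intro σ
    rw [mono, map_list_prod, List.map_map]
    congr 1
    simp [Function.comp_def]
  have hprodeq :
      (((List.range r).map v).map fun pr => subMat F n pr.1).prod
        = (L.map (subMat F n)).prod := by
    rw [hL, List.map_map, List.map_map]
    rfl
  constructor
  · intro hid
    have := hid (fun pr => subMat F n pr.1) (fun pr => subMat_mem_BT1gr F n pr.1)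
    rw [hmapeq, hprodeq] at this
    exact hne this
  · refine ⟨fun t => subMat F n (v t).1, fun t _ => subMat_mem_BT1gr F n (v t).1, ?_⟩
    have : ((List.range r).map fun t => subMat F n (v t).1).prod
        = (L.map (subMat F n)).prod := by
      rw [hL, List.map_map]
      rfl
    rw [this]
    exact hne
end
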